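/- Let Ω ⊆ ℝ^d be open and bounded, p ∈ (1,∞), μ ∈ P_p(Ω), and f_n, f ∈ L^p(μ; ℝ^m). Then f_n → f in L^p(μ) (i.e., ∫ |f_n − f|_p^p dμ → 0) if and only if d_TLp((μ, f_n), (μ, f)) → 0. -/

import Mathlib

open MeasureTheory Filter Topology

/-- `∑ i, |v i|^p`, the p-th power of the ℓ^p norm on ℝ^k. -/
noncomputable def lpPow (p : ℝ) {k : ℕ} (v : Fin k → ℝ) : ℝ := ∑ i, |v i| ^ p

/-- `π` is a coupling (transport plan) between `μ` and `ν`. -/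
def IsCoupling {α β : Type*} [MeasurableSpace α] [MeasurableSpace β]
    (π : Measure (α × β)) (μ : Measure α) (ν : Measure β) : Prop :=
  π.map Prod.fst = μ ∧ π.map Prod.snd = ν

/-- The Kantorovich optimal transport cost for a cost function `c`. -/
noncomputable def OTCost {α β : Type*} [MeasurableSpace α] [MeasurableSpace β]
    (c : α → β → ℝ) (μ : Measure α) (ν : Measure β) : ℝ :=
  ⨅ π : {π : Measure (α × β) // IsCoupling π μ ν},
    ∫ z, c z.1 z.2 ∂(π : Measure (α × β))

/-- The TL^p distance between `(μ, f)` and `(ν, g)`. -/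
noncomputable def dTLp (p : ℝ) {d m : ℕ} (μ ν : Measure (Fin d → ℝ))
    (f g : (Fin d → ℝ) → Fin m → ℝ) : ℝ :=
  (OTCost (fun x y => lpPow p (x - y) + lpPow p (f x - g y)) μ ν) ^ (1 / p)

/-!
The diagonal plan `x ↦ (x, x)` gives `d_TLp((μ, fₙ), (μ, f))^p ≤ ∫ |fₙ - f|^p dμ`. Conversely,
along near-optimal plans `πₙ` both `∫ |x - y|^p dπₙ` and `∫ |fₙ(x) - f(y)|^p dπₙ` tend to zero,
and `|fₙ(x) - f(x)|^p ≤ 2^p (|fₙ(x) - f(y)|^p + |f(y) - f(x)|^p)`. The last term is small because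
`f` is `L^p`-close to a bounded uniformly continuous `g`, for which
`|g x - g y|^p ≤ η + C_η |x - y|^p`. Boundedness of `Ω` makes every transport cost integrable,
so that the Bochner integrals involved are not junk zeros.
-/

section lpPow

variable {p : ℝ} {k : ℕ}

lemma lpPow_nonneg (v : Fin k → ℝ) : 0 ≤ lpPow p v :=
  Finset.sum_nonneg fun _ _ => Real.rpow_nonneg (abs_nonneg _) _

lemma lpPow_zero (hp : p ≠ 0) : lpPow p (0 : Fin k → ℝ) = 0 := by
  simp [lpPow, Real.zero_rpow hp]

lemma lpPow_neg (v : Fin k → ℝ) : lpPow p (-v) = lpPow p v := by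
  simp [lpPow]

lemma lpPow_sub_comm (a b : Fin k → ℝ) : lpPow p (a - b) = lpPow p (b - a) := by
  rw [← neg_sub, lpPow_neg]

lemma continuous_lpPow (hp : 0 ≤ p) : Continuous (lpPow p (k := k)) :=
  continuous_finsetSum _ fun i _ => (continuous_apply i).abs.rpow_const fun _ => Or.inr hp

lemma lpPow_le_of_norm_le (hp : 0 ≤ p) {v : Fin k → ℝ} {r : ℝ} (hv : ‖v‖ ≤ r) :
    lpPow p v ≤ k * r ^ p := by
  calc lpPow p v ≤ ∑ _i : Fin k, r ^ p := Finset.sum_le_sum fun i _ =>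
        Real.rpow_le_rpow (abs_nonneg _) ((norm_le_pi_norm v i).trans hv) hp
  _ = k * r ^ p := by simp

lemma norm_rpow_le_lpPow (hp : 0 < p) (v : Fin k → ℝ) : ‖v‖ ^ p ≤ lpPow p v := by
  have hle : ‖v‖ ≤ lpPow p v ^ p⁻¹ :=
    (pi_norm_le_iff_of_nonneg (Real.rpow_nonneg (lpPow_nonneg v) _)).2 fun i =>
      (Real.le_rpow_inv_iff_of_pos (norm_nonneg _) (lpPow_nonneg v) hp).2 <|
        Finset.single_le_sum (f := fun i => |v i| ^ p)
          (fun j _ => Real.rpow_nonneg (abs_nonneg _) _) (Finset.mem_univ i)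
  exact (Real.le_rpow_inv_iff_of_pos (norm_nonneg _) (lpPow_nonneg v) hp).1 hle

lemma lpPow_add_le (hp : 0 ≤ p) (a b : Fin k → ℝ) :
    lpPow p (a + b) ≤ 2 ^ p * (lpPow p a + lpPow p b) := by
  have key (s t : ℝ) : |s + t| ^ p ≤ 2 ^ p * (|s| ^ p + |t| ^ p) := by
    have hmax : |s + t| ≤ 2 * max |s| |t| := by
      linarith [abs_add_le s t, le_max_left |s| |t|, le_max_right |s| |t|]
    calc |s + t| ^ p ≤ (2 * max |s| |t|) ^ p := Real.rpow_le_rpow (abs_nonneg _) hmax hp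
    _ = 2 ^ p * max |s| |t| ^ p := Real.mul_rpow zero_le_two (le_max_of_le_left (abs_nonneg s))
    _ ≤ 2 ^ p * (|s| ^ p + |t| ^ p) := by
        gcongr
        rcases max_choice |s| |t| with h | h <;> rw [h]
        · exact le_add_of_nonneg_right (Real.rpow_nonneg (abs_nonneg _) _)
        · exact le_add_of_nonneg_left (Real.rpow_nonneg (abs_nonneg _) _)
  calc lpPow p (a + b) ≤ ∑ i, 2 ^ p * (|a i| ^ p + |b i| ^ p) :=
        Finset.sum_le_sum fun i _ => key (a i) (b i)
  _ = 2 ^ p * (lpPow p a + lpPow p b) := by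
      rw [← Finset.mul_sum, Finset.sum_add_distrib]; rfl

lemma lpPow_sub_le_add (hp : 0 ≤ p) (a b : Fin k → ℝ) :
    lpPow p (a - b) ≤ 2 ^ p * (lpPow p a + lpPow p b) := by
  simpa [sub_eq_add_neg, lpPow_neg] using lpPow_add_le hp a (-b)

lemma lpPow_sub_le (hp : 0 ≤ p) (a b c : Fin k → ℝ) :
    lpPow p (a - c) ≤ 2 ^ p * (lpPow p (a - b) + lpPow p (b - c)) := by
  simpa using lpPow_add_le hp (a - b) (b - c)

lemma lpPow_sub_le_three (hp : 0 ≤ p) (a b c e : Fin k → ℝ) :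
    lpPow p (a - e) ≤
      2 ^ p * 2 ^ p * (lpPow p (a - b) + lpPow p (b - c) + lpPow p (c - e)) := by
  have h₁ := lpPow_sub_le hp a b e
  have h₂ := mul_le_mul_of_nonneg_left (lpPow_sub_le hp b c e) (Real.rpow_nonneg zero_le_two p)
  have h₃ := mul_le_mul_of_nonneg_left (Real.one_le_rpow one_le_two hp)
    (mul_nonneg (Real.rpow_nonneg zero_le_two p) (lpPow_nonneg (p := p) (a - b)))
  nlinarith

end lpPow

namespace MeasureTheory

variable {α : Type*} [MeasurableSpace α] {μ : Measure α} {p : ℝ} {k : ℕ}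

lemma MemLp.integrable_lpPow (hp : 0 < p) {f : α → Fin k → ℝ}
    (hf : MemLp f (ENNReal.ofReal p) μ) : Integrable (fun x => lpPow p (f x)) μ := by
  have hbound : Integrable (fun x => (k : ℝ) * ‖f x‖ ^ p) μ := by
    simpa [ENNReal.toReal_ofReal hp.le] using
      (hf.integrable_norm_rpow (by simpa using hp) ENNReal.ofReal_ne_top).const_mul (k : ℝ)
  refine hbound.mono' ((continuous_lpPow hp.le).comp_aestronglyMeasurable
    hf.aestronglyMeasurable) (Eventually.of_forall fun x => ?_)
  rw [Real.norm_of_nonneg (lpPow_nonneg _)]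
  exact lpPow_le_of_norm_le hp.le le_rfl

lemma MemLp.exists_continuous_integral_lpPow_sub_le [TopologicalSpace α] [NormalSpace α]
    [R1Space α] [WeaklyLocallyCompactSpace α] [BorelSpace α] [μ.Regular] (hp : 0 < p)
    {f : α → Fin k → ℝ} (hf : MemLp f (ENNReal.ofReal p) μ) {ε : ℝ} (hε : 0 < ε) :
    ∃ g : α → Fin k → ℝ, Continuous g ∧ HasCompactSupport g ∧ MemLp g (ENNReal.ofReal p) μ ∧
      ∫ x, lpPow p (f x - g x) ∂μ ≤ ε := by
  obtain ⟨g, hg_supp, hfg, hg_cont, hg⟩ :=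
    hf.exists_hasCompactSupport_integral_rpow_sub_le hp (ε := ε / (k + 1)) (by positivity)
  refine ⟨g, hg_cont, hg_supp, hg, ?_⟩
  have hint : Integrable (fun x => ‖f x - g x‖ ^ p) μ := by
    simpa [ENNReal.toReal_ofReal hp.le] using
      (hf.sub hg).integrable_norm_rpow (by simpa using hp) ENNReal.ofReal_ne_top
  calc ∫ x, lpPow p (f x - g x) ∂μ ≤ ∫ x, (k : ℝ) * ‖f x - g x‖ ^ p ∂μ :=
        integral_mono ((hf.sub hg).integrable_lpPow hp) (hint.const_mul _)
          fun x => lpPow_le_of_norm_le hp.le le_rfl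
  _ = k * ∫ x, ‖f x - g x‖ ^ p ∂μ := integral_const_mul _ _
  _ ≤ k * (ε / (k + 1)) := by gcongr
  _ ≤ ε := by
      rw [mul_div_assoc', div_le_iff₀ (by positivity)]
      nlinarith

end MeasureTheory

namespace IsCoupling

variable {α β : Type*} [MeasurableSpace α] [MeasurableSpace β] {π : Measure (α × β)}
  {μ : Measure α} {ν : Measure β}

lemma measurePreserving_fst (hπ : IsCoupling π μ ν) : MeasurePreserving Prod.fst π μ :=
  ⟨measurable_fst, hπ.1⟩

lemma measurePreserving_snd (hπ : IsCoupling π μ ν) : MeasurePreserving Prod.snd π ν :=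
  ⟨measurable_snd, hπ.2⟩

lemma isProbabilityMeasure (hπ : IsCoupling π μ ν) [IsProbabilityMeasure μ] :
    IsProbabilityMeasure π :=
  ⟨by rw [← Set.preimage_univ (f := Prod.fst), ← Measure.map_apply measurable_fst .univ, hπ.1,
    measure_univ]⟩

variable {E : Type*} [NormedAddCommGroup E] [NormedSpace ℝ E]

lemma integral_comp_fst (hπ : IsCoupling π μ ν) {h : α → E} (hh : AEStronglyMeasurable h μ) :
    ∫ z, h z.1 ∂π = ∫ x, h x ∂μ := by
  rw [← hπ.1, integral_map measurable_fst.aemeasurable (hπ.1 ▸ hh)]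

lemma integral_comp_snd (hπ : IsCoupling π μ ν) {h : β → E} (hh : AEStronglyMeasurable h ν) :
    ∫ z, h z.2 ∂π = ∫ y, h y ∂ν := by
  rw [← hπ.2, integral_map measurable_snd.aemeasurable (hπ.2 ▸ hh)]

end IsCoupling

lemma isCoupling_map_diag {α : Type*} [MeasurableSpace α] (μ : Measure α) :
    IsCoupling (μ.map fun x => (x, x)) μ μ := by
  have hdiag : Measurable fun x : α => (x, x) := measurable_id.prodMk measurable_id
  constructor <;> rw [Measure.map_map (by fun_prop) hdiag] <;> exact Measure.map_id

lemma isCoupling_prod {α β : Type*} [MeasurableSpace α] [MeasurableSpace β] (μ : Measure α)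
    (ν : Measure β) [IsProbabilityMeasure μ] [IsProbabilityMeasure ν] :
    IsCoupling (μ.prod ν) μ ν := by
  constructor <;> simp [Measure.map_fst_prod, Measure.map_snd_prod]

lemma measurableEmbedding_diag {α : Type*} [MeasurableSpace α] [MeasurableEq α] :
    MeasurableEmbedding fun x : α => (x, x) :=
  .of_measurable_inverse (measurable_id.prodMk measurable_id)
    (Set.range_diag (α := α) ▸ measurableSet_diagonal) measurable_fst fun _ => rfl

section OTCost

variable {α β : Type*} [MeasurableSpace α] [MeasurableSpace β] {c : α → β → ℝ}
  {μ : Measure α} {ν : Measure β}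

lemma OTCost_nonneg (hc : ∀ x y, 0 ≤ c x y) : 0 ≤ OTCost c μ ν :=
  Real.iInf_nonneg fun _ => integral_nonneg fun _ => hc _ _

lemma OTCost_le_integral (hc : ∀ x y, 0 ≤ c x y) {π : Measure (α × β)}
    (hπ : IsCoupling π μ ν) : OTCost c μ ν ≤ ∫ z, c z.1 z.2 ∂π :=
  ciInf_le (f := fun π : {π : Measure (α × β) // IsCoupling π μ ν} => ∫ z, c z.1 z.2 ∂π.1)
    ⟨0, by rintro _ ⟨π, rfl⟩; exact integral_nonneg fun _ => hc _ _⟩ ⟨π, hπ⟩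

lemma OTCost_le_integral_diag [MeasurableEq α] {c : α → α → ℝ} (hc : ∀ x y, 0 ≤ c x y) :
    OTCost c μ μ ≤ ∫ x, c x x ∂μ :=
  (OTCost_le_integral hc (isCoupling_map_diag μ)).trans_eq
    (measurableEmbedding_diag.integral_map fun z : α × α => c z.1 z.2)

lemma exists_isCoupling_integral_lt [IsProbabilityMeasure μ] [IsProbabilityMeasure ν] {t : ℝ}
    (h : OTCost c μ ν < t) : ∃ π, IsCoupling π μ ν ∧ ∫ z, c z.1 z.2 ∂π < t := by
  have : Nonempty {π : Measure (α × β) // IsCoupling π μ ν} := ⟨⟨_, isCoupling_prod μ ν⟩⟩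
  obtain ⟨⟨π, hπ⟩, hlt⟩ := exists_lt_of_ciInf_lt h
  exact ⟨π, hπ, hlt⟩

lemma exists_isCoupling_tendsto_integral [IsProbabilityMeasure μ] [IsProbabilityMeasure ν]
    {c : ℕ → α → β → ℝ} (hc : ∀ n x y, 0 ≤ c n x y)
    (h : Tendsto (fun n => OTCost (c n) μ ν) atTop (𝓝 0)) :
    ∃ π : ℕ → Measure (α × β), (∀ n, IsCoupling (π n) μ ν) ∧
      Tendsto (fun n => ∫ z, c n z.1 z.2 ∂π n) atTop (𝓝 0) := by
  choose π hπ hlt using fun n : ℕ =>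
    exists_isCoupling_integral_lt (c := c n) (μ := μ) (ν := ν)
      (lt_add_of_pos_right _ (Nat.one_div_pos_of_nat (n := n) (α := ℝ)))
  refine ⟨π, hπ, squeeze_zero (fun n => integral_nonneg fun _ => hc n _ _)
    (fun n => (hlt n).le) ?_⟩
  simpa using h.add tendsto_one_div_add_atTop_nhds_zero_nat

end OTCost

lemma tendsto_rpow_one_div_nhds_zero_iff {ι : Type*} {l : Filter ι} {a : ι → ℝ}
    (ha : ∀ i, 0 ≤ a i) {p : ℝ} (hp : 0 < p) :
    Tendsto (fun i => a i ^ (1 / p)) l (𝓝 0) ↔ Tendsto a l (𝓝 0) := by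
  constructor <;> intro h
  · simpa [← Real.rpow_mul (ha _), hp.ne', Real.zero_rpow] using
      h.rpow_const (p := p) (Or.inr hp.le)
  · simpa [Real.zero_rpow, hp.ne'] using h.rpow_const (p := 1 / p) (Or.inr (by positivity))

lemma tendsto_nhds_zero_of_forall_le_add_mul {ι : Type*} {l : Filter ι} {a b : ι → ℝ}
    (ha : ∀ i, 0 ≤ a i) (hb : Tendsto b l (𝓝 0)) (h : ∀ η > 0, ∃ C, ∀ i, a i ≤ η + C * b i) :
    Tendsto a l (𝓝 0) := by
  refine Metric.tendsto_nhds.2 fun ε hε => ?_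
  obtain ⟨C, hC⟩ := h (ε / 2) (half_pos hε)
  have hCb : Tendsto (fun i => C * b i) l (𝓝 0) := by simpa using hb.const_mul C
  filter_upwards [hCb.eventually (Iio_mem_nhds (half_pos hε))] with i hi
  rw [Real.dist_0_eq_abs, abs_of_nonneg (ha i)]
  linarith [hC i]

section Transport

variable {p : ℝ} {d m : ℕ}

lemma IsCoupling.integrable_lpPow_sub {μ ν : Measure (Fin d → ℝ)} [IsProbabilityMeasure μ]
    {π : Measure ((Fin d → ℝ) × (Fin d → ℝ))} (hπ : IsCoupling π μ ν) (hp : 0 ≤ p) {R : ℝ}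
    (hμ : ∀ᵐ x ∂μ, ‖x‖ ≤ R) (hν : ∀ᵐ y ∂ν, ‖y‖ ≤ R) :
    Integrable (fun z => lpPow p (z.1 - z.2)) π := by
  have := hπ.isProbabilityMeasure
  refine (integrable_const ((d : ℝ) * (R + R) ^ p)).mono'
    ((continuous_lpPow hp).comp (continuous_fst.sub continuous_snd)).aestronglyMeasurable ?_
  filter_upwards [hπ.measurePreserving_fst.quasiMeasurePreserving.ae hμ,
    hπ.measurePreserving_snd.quasiMeasurePreserving.ae hν] with z hx hy
  rw [Real.norm_of_nonneg (lpPow_nonneg _)]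
  exact lpPow_le_of_norm_le hp ((norm_sub_le _ _).trans (add_le_add hx hy))

lemma IsCoupling.integrable_lpPow_comp_sub {α β : Type*} [MeasurableSpace α] [MeasurableSpace β]
    {μ : Measure α} {ν : Measure β} {π : Measure (α × β)} (hπ : IsCoupling π μ ν) (hp : 0 < p)
    {f : α → Fin m → ℝ} {g : β → Fin m → ℝ} (hf : MemLp f (ENNReal.ofReal p) μ)
    (hg : MemLp g (ENNReal.ofReal p) ν) :
    Integrable (fun z => lpPow p (f z.1 - g z.2)) π := by
  have hf' := hπ.measurePreserving_fst.integrable_comp_of_integrable (hf.integrable_lpPow hp)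
  have hg' := hπ.measurePreserving_snd.integrable_comp_of_integrable (hg.integrable_lpPow hp)
  refine ((hf'.add hg').const_mul (2 ^ p)).mono' ((continuous_lpPow hp.le).comp_aestronglyMeasurable
    ((hf.aestronglyMeasurable.comp_measurePreserving hπ.measurePreserving_fst).sub
      (hg.aestronglyMeasurable.comp_measurePreserving hπ.measurePreserving_snd)))
    (Eventually.of_forall fun z => ?_)
  rw [Real.norm_of_nonneg (lpPow_nonneg _)]
  exact lpPow_sub_le_add hp.le _ _

lemma IsCoupling.integral_lpPow_sub_le {α : Type*} [MeasurableSpace α] {μ : Measure α}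
    {π : Measure (α × α)} (hπ : IsCoupling π μ μ) (hp : 0 < p) {f g : α → Fin m → ℝ}
    (hf : MemLp f (ENNReal.ofReal p) μ) (hg : MemLp g (ENNReal.ofReal p) μ) :
    ∫ x, lpPow p (g x - f x) ∂μ ≤
      2 ^ p * (∫ z, lpPow p (g z.1 - f z.2) ∂π + ∫ z, lpPow p (f z.1 - f z.2) ∂π) := by
  have hgf := hπ.integrable_lpPow_comp_sub hp hg hf
  have hff := hπ.integrable_lpPow_comp_sub hp hf hf
  have hgfμ : Integrable (fun x => lpPow p (g x - f x)) μ := (hg.sub hf).integrable_lpPow hp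
  rw [← hπ.integral_comp_fst hgfμ.aestronglyMeasurable,
    ← integral_add hgf hff, ← integral_const_mul]
  refine integral_mono_of_nonneg (Eventually.of_forall fun _ => lpPow_nonneg _)
    ((hgf.add hff).const_mul _) (Eventually.of_forall fun z => ?_)
  simpa only [lpPow_sub_comm (f z.2)] using lpPow_sub_le hp.le (g z.1) (f z.2) (f z.1)

lemma IsCoupling.integral_lpPow_comp_sub_le {α : Type*} [MeasurableSpace α] {μ : Measure α}
    {π : Measure (α × α)} (hπ : IsCoupling π μ μ) (hp : 0 < p) {f g : α → Fin m → ℝ}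
    (hf : MemLp f (ENNReal.ofReal p) μ) (hg : MemLp g (ENNReal.ofReal p) μ) :
    ∫ z, lpPow p (f z.1 - f z.2) ∂π ≤
      2 ^ p * 2 ^ p * (2 * ∫ x, lpPow p (f x - g x) ∂μ + ∫ z, lpPow p (g z.1 - g z.2) ∂π) := by
  have hfgμ : Integrable (fun x => lpPow p (f x - g x)) μ := (hf.sub hg).integrable_lpPow hp
  have hgfμ : Integrable (fun x => lpPow p (g x - f x)) μ := (hg.sub hf).integrable_lpPow hp
  have hfg : Integrable (fun z : α × α => lpPow p (f z.1 - g z.1)) π :=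
    hπ.measurePreserving_fst.integrable_comp_of_integrable hfgμ
  have hgg := hπ.integrable_lpPow_comp_sub hp hg hg
  have hgf : Integrable (fun z : α × α => lpPow p (g z.2 - f z.2)) π :=
    hπ.measurePreserving_snd.integrable_comp_of_integrable hgfμ
  have hfgg : Integrable (fun z => lpPow p (f z.1 - g z.1) + lpPow p (g z.1 - g z.2)) π :=
    hfg.add hgg
  calc ∫ z, lpPow p (f z.1 - f z.2) ∂π
      ≤ ∫ z, 2 ^ p * 2 ^ p * (lpPow p (f z.1 - g z.1) + lpPow p (g z.1 - g z.2)
          + lpPow p (g z.2 - f z.2)) ∂π :=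
        integral_mono_of_nonneg (Eventually.of_forall fun _ => lpPow_nonneg _)
          ((hfgg.add hgf).const_mul _)
          (Eventually.of_forall fun z => lpPow_sub_le_three hp.le _ _ _ _)
  _ = 2 ^ p * 2 ^ p * (∫ x, lpPow p (f x - g x) ∂μ + ∫ z, lpPow p (g z.1 - g z.2) ∂π
        + ∫ x, lpPow p (g x - f x) ∂μ) := by
      rw [integral_const_mul, integral_add hfgg hgf, integral_add hfg hgg,
        hπ.integral_comp_fst hfgμ.aestronglyMeasurable,
        hπ.integral_comp_snd hgfμ.aestronglyMeasurable]
  _ = 2 ^ p * 2 ^ p * (2 * ∫ x, lpPow p (f x - g x) ∂μ + ∫ z, lpPow p (g z.1 - g z.2) ∂π) := by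
      rw [integral_congr_ae (.of_forall fun x => lpPow_sub_comm (g x) (f x))]; ring

end Transport

section Continuity

variable {p : ℝ} {d m : ℕ}

lemma UniformContinuous.exists_lpPow_sub_le_add_mul_dist_rpow {X : Type*} [PseudoMetricSpace X]
    {g : X → Fin m → ℝ} (hg : UniformContinuous g) {K : ℝ} (hK : ∀ x, ‖g x‖ ≤ K) (hp : 0 < p)
    {η : ℝ} (hη : 0 < η) : ∃ C ≥ 0, ∀ x y, lpPow p (g x - g y) ≤ η + C * dist x y ^ p := by
  have hsmall : ∀ᶠ v in 𝓝 (0 : Fin m → ℝ), lpPow p v < η :=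
    ((continuous_lpPow hp.le).tendsto' 0 0 (lpPow_zero hp.ne')).eventually (gt_mem_nhds hη)
  obtain ⟨ρ, hρ, hρη⟩ := Metric.eventually_nhds_iff.1 hsmall
  obtain ⟨δ, hδ, hδρ⟩ := Metric.uniformContinuous_iff.1 hg ρ hρ
  -- Far from the diagonal, `lpPow p (g x - g y)` is bounded and `dist x y ^ p ≥ δ ^ p`.
  set C := m * (2 * |K|) ^ p / δ ^ p
  refine ⟨C, by positivity, fun x y => ?_⟩
  rcases lt_or_ge (dist x y) δ with hxy | hxy
  · have hnear := hρη (by simpa [dist_eq_norm] using hδρ hxy)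
    have : 0 ≤ C * dist x y ^ p := by positivity
    linarith
  · have hfar : lpPow p (g x - g y) ≤ m * (2 * |K|) ^ p :=
      lpPow_le_of_norm_le hp.le <|
        (norm_sub_le _ _).trans (by linarith [hK x, hK y, le_abs_self K])
    calc lpPow p (g x - g y) ≤ C * δ ^ p := by
          rwa [div_mul_cancel₀ _ (Real.rpow_pos_of_pos hδ p).ne']
    _ ≤ C * dist x y ^ p := by gcongr
    _ ≤ η + C * dist x y ^ p := le_add_of_nonneg_left hη.le

lemma MeasureTheory.MemLp.exists_integral_lpPow_comp_sub_le {μ : Measure (Fin d → ℝ)}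
    [IsProbabilityMeasure μ] (hp : 0 < p) {f : (Fin d → ℝ) → Fin m → ℝ}
    (hf : MemLp f (ENNReal.ofReal p) μ) {η : ℝ} (hη : 0 < η) :
    ∃ C, ∀ π : Measure ((Fin d → ℝ) × (Fin d → ℝ)), IsCoupling π μ μ →
      Integrable (fun z => lpPow p (z.1 - z.2)) π →
      ∫ z, lpPow p (f z.1 - f z.2) ∂π ≤ η + C * ∫ z, lpPow p (z.1 - z.2) ∂π := by
  set L : ℝ := 2 ^ p * 2 ^ p
  set η' := η / (3 * L)
  have hLη : 3 * L * η' = η := mul_div_cancel₀ _ (by positivity)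
  obtain ⟨g, hg_cont, hg_supp, hg, hfg⟩ :=
    hf.exists_continuous_integral_lpPow_sub_le hp (ε := η') (by positivity)
  obtain ⟨K, hK⟩ := hg_supp.exists_bound_of_continuous hg_cont
  obtain ⟨C, hC0, hC⟩ := UniformContinuous.exists_lpPow_sub_le_add_mul_dist_rpow
    (hg_supp.uniformContinuous_of_continuous hg_cont) hK hp (η := η') (by positivity)
  refine ⟨L * C, fun π hπ hdiag => ?_⟩
  have := hπ.isProbabilityMeasure
  have hgg : ∫ z, lpPow p (g z.1 - g z.2) ∂π ≤ η' + C * ∫ z, lpPow p (z.1 - z.2) ∂π := by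
    calc ∫ z, lpPow p (g z.1 - g z.2) ∂π ≤ ∫ z, (η' + C * lpPow p (z.1 - z.2)) ∂π :=
          integral_mono (hπ.integrable_lpPow_comp_sub hp hg hg)
            ((integrable_const η').add (hdiag.const_mul C)) fun z => (hC z.1 z.2).trans <| by
              gcongr; rw [dist_eq_norm]; exact norm_rpow_le_lpPow hp _
    _ = η' + C * ∫ z, lpPow p (z.1 - z.2) ∂π := by
        rw [integral_add (integrable_const η') (hdiag.const_mul C), integral_const,
          integral_const_mul, probReal_univ, one_smul]
  calc ∫ z, lpPow p (f z.1 - f z.2) ∂π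
      ≤ L * (2 * ∫ x, lpPow p (f x - g x) ∂μ + ∫ z, lpPow p (g z.1 - g z.2) ∂π) :=
        hπ.integral_lpPow_comp_sub_le hp hf hg
  _ ≤ L * (2 * η' + (η' + C * ∫ z, lpPow p (z.1 - z.2) ∂π)) := by gcongr
  _ = η + L * C * ∫ z, lpPow p (z.1 - z.2) ∂π := by rw [← hLη]; ring

end Continuity

lemma MeasureTheory.MemLp.tendsto_integral_lpPow_comp_sub {p : ℝ} {d m : ℕ}
    {μ : Measure (Fin d → ℝ)} [IsProbabilityMeasure μ] (hp : 0 < p)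
    {f : (Fin d → ℝ) → Fin m → ℝ} (hf : MemLp f (ENNReal.ofReal p) μ) {ι : Type*}
    {l : Filter ι} {π : ι → Measure ((Fin d → ℝ) × (Fin d → ℝ))} (hπ : ∀ i, IsCoupling (π i) μ μ)
    (hint : ∀ i, Integrable (fun z => lpPow p (z.1 - z.2)) (π i))
    (hdiag : Tendsto (fun i => ∫ z, lpPow p (z.1 - z.2) ∂π i) l (𝓝 0)) :
    Tendsto (fun i => ∫ z, lpPow p (f z.1 - f z.2) ∂π i) l (𝓝 0) :=
  tendsto_nhds_zero_of_forall_le_add_mul (fun _ => integral_nonneg fun _ => lpPow_nonneg _) hdiag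
    fun _η hη => (hf.exists_integral_lpPow_comp_sub_le hp hη).imp fun _C hC i =>
      hC (π i) (hπ i) (hint i)

theorem lp_tendsto_iff_tlp_tendsto_general {d m : ℕ} (Ω : Set (Fin d → ℝ))
    (hΩb : Bornology.IsBounded Ω) (p : ℝ) (hp1 : 1 < p)
    (μ : Measure (Fin d → ℝ)) (hμ : IsProbabilityMeasure μ) (hμΩ : μ Ωᶜ = 0)
    (fseq : ℕ → (Fin d → ℝ) → Fin m → ℝ) (f : (Fin d → ℝ) → Fin m → ℝ)
    (hfseq : ∀ n, MemLp (fseq n) (ENNReal.ofReal p) μ)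
    (hf : MemLp f (ENNReal.ofReal p) μ) :
    Tendsto (fun n => ∫ x, lpPow p (fseq n x - f x) ∂μ) atTop (𝓝 0)
      ↔ Tendsto (fun n => dTLp p μ μ (fseq n) f) atTop (𝓝 0) := by
  have hp : 0 < p := one_pos.trans hp1
  obtain ⟨R, hR⟩ := hΩb.exists_norm_le
  have hμR : ∀ᵐ x ∂μ, ‖x‖ ≤ R := (show ∀ᵐ x ∂μ, x ∈ Ω from mem_ae_iff.2 hμΩ).mono hR
  set c : ℕ → (Fin d → ℝ) → (Fin d → ℝ) → ℝ :=
    fun n x y => lpPow p (x - y) + lpPow p (fseq n x - f y)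
  have hc : ∀ n x y, 0 ≤ c n x y := fun _ _ _ => add_nonneg (lpPow_nonneg _) (lpPow_nonneg _)
  unfold dTLp
  rw [tendsto_rpow_one_div_nhds_zero_iff (fun n => OTCost_nonneg (hc n)) hp]
  constructor
  · refine squeeze_zero (fun n => OTCost_nonneg (hc n))
      fun n => (OTCost_le_integral_diag (hc n)).trans_eq ?_
    simp [c, lpPow_zero hp.ne']
  · intro hcost
    obtain ⟨π, hπ, hπcost⟩ := exists_isCoupling_tendsto_integral hc hcost
    have hdiag_int n := (hπ n).integrable_lpPow_sub hp.le hμR hμR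
    have hcost_int n : Integrable (fun z => c n z.1 z.2) (π n) :=
      (hdiag_int n).add ((hπ n).integrable_lpPow_comp_sub hp (hfseq n) hf)
    have hdiag : Tendsto (fun n => ∫ z, lpPow p (z.1 - z.2) ∂π n) atTop (𝓝 0) :=
      squeeze_zero (fun _ => integral_nonneg fun _ => lpPow_nonneg _) (fun n =>
        integral_mono_of_nonneg (.of_forall fun _ => lpPow_nonneg _) (hcost_int n)
          (.of_forall fun _ => le_add_of_nonneg_right (lpPow_nonneg _))) hπcost
    have hgap : Tendsto (fun n => ∫ z, lpPow p (fseq n z.1 - f z.2) ∂π n) atTop (𝓝 0) :=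
      squeeze_zero (fun _ => integral_nonneg fun _ => lpPow_nonneg _) (fun n =>
        integral_mono_of_nonneg (.of_forall fun _ => lpPow_nonneg _) (hcost_int n)
          (.of_forall fun _ => le_add_of_nonneg_left (lpPow_nonneg _))) hπcost
    refine squeeze_zero (fun _ => integral_nonneg fun _ => lpPow_nonneg _)
      (fun n => (hπ n).integral_lpPow_sub_le hp hf (hfseq n)) ?_
    simpa using (hgap.add (hf.tendsto_integral_lpPow_comp_sub hp hπ hdiag_int hdiag)).const_mul
      (2 ^ p)

/-- `f_n → f` in `L^p(μ)` if and only if `d_TLp((μ, f_n), (μ, f)) → 0`. -/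
theorem lp_tendsto_iff_tlp_tendsto {d m : ℕ} (Ω : Set (Fin d → ℝ)) (hΩo : IsOpen Ω)
    (hΩb : Bornology.IsBounded Ω) (p : ℝ) (hp1 : 1 < p)
    (μ : Measure (Fin d → ℝ)) (hμ : IsProbabilityMeasure μ) (hμΩ : μ Ωᶜ = 0)
    (fseq : ℕ → (Fin d → ℝ) → Fin m → ℝ) (f : (Fin d → ℝ) → Fin m → ℝ)
    (hfseq : ∀ n, MemLp (fseq n) (ENNReal.ofReal p) μ)
    (hf : MemLp f (ENNReal.ofReal p) μ) :
    Tendsto (fun n => ∫ x, lpPow p (fseq n x - f x) ∂μ) atTop (𝓝 0)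
      ↔ Tendsto (fun n => dTLp p μ μ (fseq n) f) atTop (𝓝 0) :=
  lp_tendsto_iff_tlp_tendsto_general Ω hΩb p hp1 μ hμ hμΩ fseq f hfseq hf
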